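/- Let n, p be positive integers, X an n×p real matrix, B a p×p symmetric positive definite matrix, b ∈ ℝᵖ, and y ∈ {0,1}ⁿ; set z = y − (1/2)1ₙ. There exists a finite constant c₁, not depending on β or w, such that for all β ∈ ℝᵖ and all w ∈ (0,∞)ⁿ, −(1/2)(β − μ(w))ᵀ Σ(w)⁻¹ (β − μ(w)) ≤ −(1/2)(β − (BXᵀz + b))ᵀ B⁻¹ (β − (BXᵀz + b)) + c₁. -/

import Mathlib

open MeasureTheory Matrix Real

/-- The density of the Pólya-Gamma PG(1,0) distribution. -/
noncomputable def pgDensity (z : ℝ) : ℝ :=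
  ∑' k : ℕ, (-1 : ℝ) ^ k * (2 * (k : ℝ) + 1) / Real.sqrt (2 * Real.pi * z ^ 3) *
    Real.exp (-(2 * (k : ℝ) + 1) ^ 2 / (8 * z))

/-- Σ(w) = (Xᵀ Ω(w) X + B⁻¹)⁻¹, with Ω(w) = diag(w₁,…,wₙ). -/
noncomputable def sigmaMat {n p : ℕ} (X : Matrix (Fin n) (Fin p) ℝ)
    (B : Matrix (Fin p) (Fin p) ℝ) (w : Fin n → ℝ) : Matrix (Fin p) (Fin p) ℝ :=
  (Xᵀ * Matrix.diagonal w * X + B⁻¹)⁻¹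

/-- μ(w) = Σ(w)[Xᵀ(y − (1/2)1ₙ) + B⁻¹b]. -/
noncomputable def muVec {n p : ℕ} (X : Matrix (Fin n) (Fin p) ℝ)
    (B : Matrix (Fin p) (Fin p) ℝ) (b : Fin p → ℝ) (y : Fin n → ℝ) (w : Fin n → ℝ) :
    Fin p → ℝ :=
  (sigmaMat X B w) *ᵥ (Xᵀ *ᵥ (fun i => y i - 1 / 2) + B⁻¹ *ᵥ b)

/-- π(β|w) : the N_p(μ(w), Σ(w)) density at β. -/
noncomputable def piBeta {n p : ℕ} (X : Matrix (Fin n) (Fin p) ℝ)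
    (B : Matrix (Fin p) (Fin p) ℝ) (b : Fin p → ℝ) (y : Fin n → ℝ)
    (w : Fin n → ℝ) (β : Fin p → ℝ) : ℝ :=
  (2 * Real.pi) ^ (-(p : ℝ) / 2) * (sigmaMat X B w).det ^ (-(1 : ℝ) / 2) *
    Real.exp (-(1 / 2) *
      ((β - muVec X B b y w) ⬝ᵥ ((sigmaMat X B w)⁻¹ *ᵥ (β - muVec X B b y w))))

/-- π(w|β) = ∏ᵢ cosh(|xᵢᵀβ|/2) exp{−(xᵢᵀβ)² wᵢ/2} g(wᵢ). -/
noncomputable def piW {n p : ℕ} (X : Matrix (Fin n) (Fin p) ℝ)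
    (w : Fin n → ℝ) (β : Fin p → ℝ) : ℝ :=
  ∏ i, (Real.cosh (|(X *ᵥ β) i| / 2) * Real.exp (-((X *ᵥ β) i) ^ 2 * w i / 2) *
    pgDensity (w i))

/-! The precision matrix Σ(w)⁻¹ = XᵀΩ(w)X + B⁻¹ dominates B⁻¹, and μ(w) = Σ(w)v with
v = Xᵀz + B⁻¹b while BXᵀz + b = Bv. Completing the square, both quadratic forms equal
βᵀMβ − 2βᵀv + vᵀM⁻¹v for M = Σ(w)⁻¹ resp. M = B⁻¹. Dropping the nonnegative term vᵀΣ(w)v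
and using βᵀΣ(w)⁻¹β ≥ βᵀB⁻¹β gives the claim with c₁ = ½ vᵀBv. -/

namespace Matrix

variable {m : Type*} [Fintype m]

lemma posSemidef_transpose_mul_diagonal_mul {k : Type*} [Fintype k] [DecidableEq k]
    (X : Matrix k m ℝ) {w : k → ℝ} (hw : ∀ i, 0 ≤ w i) : (Xᵀ * diagonal w * X).PosSemidef := by
  simpa using (posSemidef_diagonal_iff.mpr hw).conjTranspose_mul_mul_same X

lemma dotProduct_mulVec_comm_of_isHermitian {A : Matrix m m ℝ} (hA : A.IsHermitian)
    (u x : m → ℝ) : u ⬝ᵥ (A *ᵥ x) = (A *ᵥ u) ⬝ᵥ x := by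
  rw [dotProduct_mulVec, ← mulVec_transpose, ← conjTranspose_eq_transpose_of_trivial, hA]

variable [DecidableEq m]

lemma dotProduct_mulVec_sub_inv_mulVec {A : Matrix m m ℝ} (hA : A.IsHermitian)
    (hdet : IsUnit A.det) (β v : m → ℝ) :
    (β - A⁻¹ *ᵥ v) ⬝ᵥ (A *ᵥ (β - A⁻¹ *ᵥ v)) =
      β ⬝ᵥ (A *ᵥ β) - 2 * (β ⬝ᵥ v) + v ⬝ᵥ (A⁻¹ *ᵥ v) := by
  have hv : A *ᵥ (A⁻¹ *ᵥ v) = v := by rw [mulVec_mulVec, mul_nonsing_inv _ hdet, one_mulVec]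
  rw [mulVec_sub, hv, dotProduct_sub, sub_dotProduct, sub_dotProduct,
    dotProduct_mulVec_comm_of_isHermitian hA (A⁻¹ *ᵥ v) β, hv, dotProduct_comm v β,
    dotProduct_comm v]
  ring

lemma dotProduct_mulVec_sub_inv_mulVec_le {A C : Matrix m m ℝ} (hA : A.PosDef)
    (hC : C.IsHermitian) (hCdet : IsUnit C.det) (hAC : (A - C).PosSemidef) (β v : m → ℝ) :
    (β - C⁻¹ *ᵥ v) ⬝ᵥ (C *ᵥ (β - C⁻¹ *ᵥ v)) - v ⬝ᵥ (C⁻¹ *ᵥ v) ≤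
      (β - A⁻¹ *ᵥ v) ⬝ᵥ (A *ᵥ (β - A⁻¹ *ᵥ v)) := by
  have hform : β ⬝ᵥ (C *ᵥ β) ≤ β ⬝ᵥ (A *ᵥ β) := by
    have := hAC.dotProduct_mulVec_nonneg β
    rw [star_trivial, sub_mulVec, dotProduct_sub] at this
    linarith
  have hinv : 0 ≤ v ⬝ᵥ (A⁻¹ *ᵥ v) := by
    simpa using hA.posSemidef.inv.dotProduct_mulVec_nonneg v
  rw [dotProduct_mulVec_sub_inv_mulVec hC hCdet,
    dotProduct_mulVec_sub_inv_mulVec hA.isHermitian (isUnit_iff_ne_zero.mpr hA.det_pos.ne')]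
  linarith

end Matrix

theorem stmt8 {n p : ℕ}
    (X : Matrix (Fin n) (Fin p) ℝ) (B : Matrix (Fin p) (Fin p) ℝ) (hB : B.PosDef)
    (b : Fin p → ℝ) (y : Fin n → ℝ) :
    ∃ c₁ : ℝ, ∀ (β : Fin p → ℝ) (w : Fin n → ℝ), (∀ i, 0 < w i) →
      -(1 / 2) *
          ((β - muVec X B b y w) ⬝ᵥ ((sigmaMat X B w)⁻¹ *ᵥ (β - muVec X B b y w))) ≤
        -(1 / 2) *
            ((β - (B *ᵥ (Xᵀ *ᵥ (fun i => y i - 1 / 2)) + b)) ⬝ᵥ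
              (B⁻¹ *ᵥ (β - (B *ᵥ (Xᵀ *ᵥ (fun i => y i - 1 / 2)) + b)))) + c₁ := by
  set v := Xᵀ *ᵥ (fun i => y i - 1 / 2) + B⁻¹ *ᵥ b
  refine ⟨(1 / 2) * (v ⬝ᵥ (B *ᵥ v)), fun β w hw => ?_⟩
  have hBdet : IsUnit B.det := isUnit_iff_ne_zero.mpr hB.det_pos.ne'
  have hXDX := posSemidef_transpose_mul_diagonal_mul X fun i => (hw i).le
  have hA := PosDef.posSemidef_add hXDX hB.inv
  have hSigma : (sigmaMat X B w)⁻¹ = Xᵀ * diagonal w * X + B⁻¹ :=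
    nonsing_inv_nonsing_inv _ (isUnit_iff_ne_zero.mpr hA.det_pos.ne')
  have hMu : muVec X B b y w = (Xᵀ * diagonal w * X + B⁻¹)⁻¹ *ᵥ v := rfl
  have hPrior : B *ᵥ (Xᵀ *ᵥ (fun i => y i - 1 / 2)) + b = (B⁻¹)⁻¹ *ᵥ v := by
    rw [nonsing_inv_nonsing_inv _ hBdet, mulVec_add, mulVec_mulVec b,
      mul_nonsing_inv _ hBdet, one_mulVec]
  have key := dotProduct_mulVec_sub_inv_mulVec_le hA hB.inv.isHermitian
    (isUnit_nonsing_inv_det _ hBdet) (by rwa [add_sub_cancel_right]) β v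
  rw [nonsing_inv_nonsing_inv _ hBdet] at key
  rw [hSigma, hMu, hPrior, nonsing_inv_nonsing_inv _ hBdet]
  linarith
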